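/- An automaton A is semiconnected (every principal factor is strongly connected or strongly trap-connected) if and only if for every subautomaton B of A and every a ∈ B there exist b ∈ B and a nonempty word p ∈ X+ such that a = δ(b,p). -/

import Mathlib

universe u v

/-- The transition function extended to words (`X*`). -/
def deltaStar {A X : Type*} (δ : A → X → A) : A → List X → A
  | a, [] => a
  | a, x :: p => deltaStar δ (δ a x) p

/-- `B` is a subautomaton of the automaton with transition `δ`. -/
def IsSubaut {A X : Type*} (δ : A → X → A) (B : Set A) : Prop :=
  B.Nonempty ∧ ∀ b ∈ B, ∀ x : X, δ b x ∈ B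

/-- `φ` is a retract homomorphism of the automaton onto the subautomaton `B`:
a homomorphism of `A` onto `B` leaving the elements of `B` fixed. -/
def IsRetractHom {A X : Type*} (δ : A → X → A) (B : Set A) (φ : A → A) : Prop :=
  (∀ a, φ a ∈ B) ∧ (∀ b ∈ B, φ b = b) ∧ ∀ a x, φ (δ a x) = δ (φ a) x

/-- `B` is a retract subautomaton. -/
def IsRetract {A X : Type*} (δ : A → X → A) (B : Set A) : Prop :=
  ∃ φ, IsRetractHom δ B φ

/-- An automaton is retractable if every subautomaton is retract. -/
def Retractable {A X : Type*} (δ : A → X → A) : Prop :=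
  ∀ B, IsSubaut δ B → IsRetract δ B

/-- Retractability of the subautomaton on the carrier `D` (homomorphisms are
represented by functions on the ambient state set, restricted to `D`). -/
def RetractableOn {A X : Type*} (δ : A → X → A) (D : Set A) : Prop :=
  ∀ C ⊆ D, IsSubaut δ C →
    ∃ φ : A → A, (∀ a ∈ D, φ a ∈ C) ∧ (∀ c ∈ C, φ c = c) ∧
      ∀ a ∈ D, ∀ x, φ (δ a x) = δ (φ a) x

/-- The principal subautomaton `R(a) = δ(a, X*)` generated by `a`. -/
def Rset {A X : Type*} (δ : A → X → A) (a : A) : Set A :=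
  {b | ∃ p : List X, deltaStar δ a p = b}

/-- The `R`-class `R_a = {b : R(b) = R(a)}`. -/
def Rclass {A X : Type*} (δ : A → X → A) (a : A) : Set A :=
  {b | Rset δ b = Rset δ a}

/-- `R[a] = R(a) − R_a`. -/
def Rideal {A X : Type*} (δ : A → X → A) (a : A) : Set A :=
  Rset δ a \ Rclass δ a

/-- The Rees congruence induced by `B`: two states are related iff they are
equal or both lie in `B`. -/
def reesRel {A : Type*} (B : Set A) (u v : A) : Prop :=
  u = v ∨ (u ∈ B ∧ v ∈ B)

/-- A minimal subautomaton: a subautomaton with no proper subautomaton. -/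
def IsMinimalSubaut {A X : Type*} (δ : A → X → A) (B : Set A) : Prop :=
  IsSubaut δ B ∧ ∀ C ⊆ B, IsSubaut δ C → C = B

/-- The automaton has a kernel: a subautomaton contained in every subautomaton. -/
def HasKernel {A X : Type*} (δ : A → X → A) : Prop :=
  ∃ K, IsSubaut δ K ∧ ∀ B, IsSubaut δ B → K ⊆ B

/-- The principal factor `R{a}` (the Rees factor of `R(a)` modulo `R[a]`,
described via the Rees congruence) is strongly connected. -/
def FactorSC {A X : Type*} (δ : A → X → A) (a : A) : Prop :=
  ∀ b ∈ Rset δ a, ∀ c ∈ Rset δ a,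
    ∃ p : List X, p ≠ [] ∧ reesRel (Rideal δ a) (deltaStar δ b p) c

/-- The principal factor `R{a}` is a strongly trap-connected non-trivial
one-trap automaton (with trap the class of `t`). -/
def FactorSTC {A X : Type*} (δ : A → X → A) (a : A) : Prop :=
  ∃ t ∈ Rset δ a,
    (∀ x, reesRel (Rideal δ a) (δ t x) t) ∧
    (∃ b ∈ Rset δ a, ¬ reesRel (Rideal δ a) b t) ∧
    (∀ b ∈ Rset δ a, (∀ x, reesRel (Rideal δ a) (δ b x) b) → reesRel (Rideal δ a) b t) ∧
    (∀ b ∈ Rset δ a, ∀ c ∈ Rset δ a, ¬ reesRel (Rideal δ a) b t →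
      ∃ p : List X, p ≠ [] ∧ reesRel (Rideal δ a) (deltaStar δ b p) c)

/-- The principal factor `R{a}` is a strongly trapped non-trivial one-trap
automaton (with trap the class of `t`). -/
def FactorST {A X : Type*} (δ : A → X → A) (a : A) : Prop :=
  ∃ t ∈ Rset δ a,
    (∃ b ∈ Rset δ a, ¬ reesRel (Rideal δ a) b t) ∧
    (∀ b ∈ Rset δ a, (∀ x, reesRel (Rideal δ a) (δ b x) b) → reesRel (Rideal δ a) b t) ∧
    (∀ b ∈ Rset δ a, ∀ x, reesRel (Rideal δ a) (δ b x) t)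

/-- Semiconnected: every principal factor is strongly connected or strongly
trap-connected. -/
def Semiconnected {A X : Type*} (δ : A → X → A) : Prop :=
  ∀ a, FactorSC δ a ∨ FactorSTC δ a

/-- The subautomaton on `D` is semiconnected, via the characterization: for
every subautomaton `C ⊆ D` and every `a ∈ C` there are `b ∈ C` and a nonempty
word `p` with `a = δ(b,p)`. -/
def SemiconnectedOn {A X : Type*} (δ : A → X → A) (D : Set A) : Prop :=
  ∀ C ⊆ D, IsSubaut δ C → ∀ a ∈ C, ∃ b ∈ C, ∃ p : List X, p ≠ [] ∧ deltaStar δ b p = a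

/-- The automaton is a dilation of its subautomaton `B`. -/
def IsDilationOf {A X : Type*} (δ : A → X → A) (B : Set A) : Prop :=
  IsSubaut δ B ∧ ∃ φ : A → A, (∀ a, φ a ∈ B) ∧ (∀ b ∈ B, φ b = b) ∧
    ∀ a x, δ a x = δ (φ a) x

/-- Extension of a partial transition function (`none` = the removed trap)
to words. -/
def pStar {C X : Type*} (d : C → X → Option C) : C → List X → Option C
  | a, [] => some a
  | a, x :: p => (d a x).bind fun b => pStar d b p

/-- The data of the Construction: a finite tree `(T, le)` with least element
`i0`; `C i` is the trap-removed part `A⁰ᵢ` of the automaton `Aᵢ`, with partial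
transition `d i` (`none` means the trap); `A_{i0}` is strongly connected and
the other `Aᵢ` are non-trivial strongly trap-connected one-trap automata;
`Φ i j` are the composite partial homomorphisms along covering chains
(given here as coherent data whose covering components satisfy conditions
(ii) and (iii)); `δ'` is the glued transition function on `A = ⋃ A⁰ᵢ`. -/
def ConstructionSpec {X : Type*} (T : Type*) (le : T → T → Prop) (i0 : T)
    (C : T → Type*) (d : ∀ i, C i → X → Option (C i))
    (Φ : ∀ i j, le j i → C i → C j)
    (δ' : (Σ i, C i) → X → Σ i, C i) : Prop :=
  (∀ i, le i i) ∧ (∀ i j, le i j → le j i → i = j) ∧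
  (∀ i j k, le i j → le j k → le i k) ∧
  Finite T ∧
  (∀ S : Set T, S.Nonempty → (∃ u, ∀ i ∈ S, le i u) → ∃ g ∈ S, ∀ i ∈ S, le i g) ∧
  (∀ i, le i0 i) ∧
  Nonempty (C i0) ∧
  (∀ (a : C i0) (x : X), (d i0 a x).isSome) ∧
  (∀ a b : C i0, ∃ p : List X, p ≠ [] ∧ pStar (d i0) a p = some b) ∧
  (∀ i, i ≠ i0 → Nonempty (C i) ∧
    (∀ a b : C i, ∃ p : List X, p ≠ [] ∧ pStar (d i) a p = some b) ∧
    (∀ a : C i, ∃ p : List X, p ≠ [] ∧ pStar (d i) a p = none)) ∧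
  (∀ i (h : le i i) (a : C i), Φ i i h a = a) ∧
  (∀ i j k (h1 : le j i) (h2 : le k j) (h3 : le k i) (a : C i),
    Φ j k h2 (Φ i j h1 a) = Φ i k h3 a) ∧
  (∀ i j (h : le j i), i ≠ j → (∀ k, le j k → le k i → k = j ∨ k = i) →
    (∀ (a : C i) (x : X) (b : C i),
      d i a x = some b → d j (Φ i j h a) x = some (Φ i j h b)) ∧
    ∃ (a : C i) (x : X), d i a x = none ∧ (d j (Φ i j h a) x).isSome) ∧
  (∀ i (a : C i) (x : X), ∃ (j : T) (hj : le j i) (b : C j),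
    δ' ⟨i, a⟩ x = ⟨j, b⟩ ∧ d j (Φ i j hj a) x = some b ∧
    ∀ k (hk : le k i), (d k (Φ i k hk a) x).isSome → le k j)


/-!
The states of `R(a)` outside `R[a]` form the `R`-class of `a`, and `a` itself lies outside
`R[a]`, where the Rees congruence is equality. Hence either kind of principal factor yields a
predecessor of `a` under a nonempty word inside `R(a)`, which lies in every subautomaton
containing `a`. Conversely, applying the hypothesis to `R(b)` shows that `b` reaches every
state of `R(b)` by a nonempty word; this makes `R{a}` strongly connected when `R[a] = ∅` and
strongly trap-connected, with trap `R[a]`, otherwise.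
-/

section Automaton

variable {A X : Type*} (δ : A → X → A)

lemma deltaStar_append (a : A) (p q : List X) :
    deltaStar δ a (p ++ q) = deltaStar δ (deltaStar δ a p) q := by
  induction p generalizing a with
  | nil => rfl
  | cons x p ih => exact ih (δ a x)

lemma deltaStar_eq_self_of_forall {b : A} (h : ∀ x, δ b x = b) (p : List X) :
    deltaStar δ b p = b := by
  induction p with
  | nil => rfl
  | cons x p ih => simpa only [deltaStar, h x] using ih

lemma mem_Rset_self (a : A) : a ∈ Rset δ a := ⟨[], rfl⟩

lemma delta_mem_Rset (a : A) (x : X) : δ a x ∈ Rset δ a := ⟨[x], rfl⟩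

lemma Rset_subset_of_mem {a b : A} (h : b ∈ Rset δ a) : Rset δ b ⊆ Rset δ a := by
  rintro c ⟨q, rfl⟩
  obtain ⟨p, rfl⟩ := h
  exact ⟨p ++ q, deltaStar_append δ a p q⟩

lemma isSubaut_Rset (a : A) : IsSubaut δ (Rset δ a) :=
  ⟨⟨a, mem_Rset_self δ a⟩, fun _ hb x => Rset_subset_of_mem δ hb (delta_mem_Rset δ _ x)⟩

lemma IsSubaut.Rset_subset {B : Set A} (hB : IsSubaut δ B) {a : A} (ha : a ∈ B) :
    Rset δ a ⊆ B := by
  rintro c ⟨p, rfl⟩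
  induction p generalizing a with
  | nil => exact ha
  | cons x p ih => exact ih (hB.2 a ha x)

lemma notMem_Rideal_self (a : A) : a ∉ Rideal δ a := fun h => h.2 rfl

lemma Rset_eq_of_notMem_Rideal {a b : A} (hb : b ∈ Rset δ a) (h : b ∉ Rideal δ a) :
    Rset δ b = Rset δ a :=
  of_not_not fun hne => h ⟨hb, hne⟩

lemma delta_mem_Rideal {a b : A} (hb : b ∈ Rideal δ a) (x : X) : δ b x ∈ Rideal δ a := by
  obtain ⟨hbR, hbC⟩ := hb
  have hxR : δ b x ∈ Rset δ a := Rset_subset_of_mem δ hbR (delta_mem_Rset δ b x)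
  refine ⟨hxR, fun hx => hbC ?_⟩
  refine (Rset_subset_of_mem δ hbR).antisymm ?_
  rw [← hx]
  exact Rset_subset_of_mem δ (delta_mem_Rset δ b x)

lemma reesRel_iff_eq {B : Set A} {u v : A} (hv : v ∉ B) : reesRel B u v ↔ u = v :=
  or_iff_left fun h => hv h.2

lemma exists_mem_Rset_deltaStar_eq_of_factor {a : A} (h : FactorSC δ a ∨ FactorSTC δ a) :
    ∃ b ∈ Rset δ a, ∃ p : List X, p ≠ [] ∧ deltaStar δ b p = a := by
  have ha := mem_Rset_self δ a
  simp_rw [← reesRel_iff_eq (notMem_Rideal_self δ a)]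
  rcases h with hSC | ⟨t, -, -, ⟨b, hb, hbt⟩, -, hconn⟩
  · exact ⟨a, ha, hSC a ha a ha⟩
  · by_cases hat : reesRel (Rideal δ a) a t
    · exact ⟨b, hb, hconn b hb a ha hbt⟩
    · exact ⟨a, ha, hconn a ha a ha hat⟩

lemma exists_ne_nil_deltaStar_eq_of_mem_Rset
    (H : ∀ B, IsSubaut δ B → ∀ a ∈ B, ∃ b ∈ B, ∃ p : List X, p ≠ [] ∧ deltaStar δ b p = a)
    (b c : A) (hc : c ∈ Rset δ b) : ∃ p : List X, p ≠ [] ∧ deltaStar δ b p = c := by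
  obtain ⟨b', ⟨r, rfl⟩, q, hq, rfl⟩ := H (Rset δ b) (isSubaut_Rset δ b) c hc
  exact ⟨r ++ q, by simp [hq], deltaStar_append δ b r q⟩

section Factor

variable {δ}
variable (hreach : ∀ b c : A, c ∈ Rset δ b → ∃ p : List X, p ≠ [] ∧ deltaStar δ b p = c)
include hreach

lemma exists_reesRel_deltaStar_of_notMem_Rideal {a b c : A} (hb : b ∈ Rset δ a) (hbI : b ∉ Rideal δ a)
    (hc : c ∈ Rset δ a) : ∃ p : List X, p ≠ [] ∧ reesRel (Rideal δ a) (deltaStar δ b p) c := by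
  rw [← Rset_eq_of_notMem_Rideal δ hb hbI] at hc
  obtain ⟨p, hp, hpc⟩ := hreach b c hc
  exact ⟨p, hp, Or.inl hpc⟩

lemma factorSC_of_Rideal_eq_empty {a : A} (hI : Rideal δ a = ∅) : FactorSC δ a :=
  fun _ hb _ hc => exists_reesRel_deltaStar_of_notMem_Rideal hreach hb (hI ▸ Set.notMem_empty _) hc

lemma factorSTC_of_mem_Rideal {a t : A} (ht : t ∈ Rideal δ a) : FactorSTC δ a := by
  have notMem_of_not_rees {b : A} (hbt : ¬ reesRel (Rideal δ a) b t) : b ∉ Rideal δ a :=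
    fun hb => hbt (Or.inr ⟨hb, ht⟩)
  refine ⟨t, ht.1, fun x => Or.inr ⟨delta_mem_Rideal δ ht x, ht⟩,
    ⟨a, mem_Rset_self δ a, fun h => notMem_Rideal_self δ a (h.elim (· ▸ ht) And.left)⟩,
    ?_, fun b hb c hc hbt => exists_reesRel_deltaStar_of_notMem_Rideal hreach hb (notMem_of_not_rees hbt) hc⟩
  intro b hb hfix
  by_contra hbt
  have hbI := notMem_of_not_rees hbt
  -- a state outside `R[a]` fixed by every letter is alone in `R(b) = R(a) ∋ t`
  have hfix' : ∀ x, δ b x = b := fun x => (reesRel_iff_eq hbI).1 (hfix x)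
  obtain ⟨p, rfl⟩ : t ∈ Rset δ b := Rset_eq_of_notMem_Rideal δ hb hbI ▸ ht.1
  exact hbI (deltaStar_eq_self_of_forall δ hfix' p ▸ ht)

end Factor

end Automaton

/-- Theorem 4. -/
theorem stmt_12 {A X : Type*} (δ : A → X → A) :
    Semiconnected δ ↔
      ∀ B, IsSubaut δ B → ∀ a ∈ B,
        ∃ b ∈ B, ∃ p : List X, p ≠ [] ∧ deltaStar δ b p = a := by
  constructor
  · intro hsc B hB a ha
    obtain ⟨b, hb, hp⟩ := exists_mem_Rset_deltaStar_eq_of_factor δ (hsc a)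
    exact ⟨b, hB.Rset_subset δ ha hb, hp⟩
  · intro H a
    have hreach := exists_ne_nil_deltaStar_eq_of_mem_Rset δ H
    rcases (Rideal δ a).eq_empty_or_nonempty with hI | ⟨t, ht⟩
    · exact .inl (factorSC_of_Rideal_eq_empty hreach hI)
    · exact .inr (factorSTC_of_mem_Rideal hreach ht)
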